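/- Let H be a 3-uniform hypergraph on n vertices with minimum codegree strictly greater than n/(r+1), for an integer r ≥ 3. Then every vertex of H meets at most r tight components. -/

import Mathlib

/-!
Fix the vertex `x` and, in each of the given pairwise non-equivalent edges `e ∋ x`, a second
vertex `y_e`. Every extension `{x, y_e, w}` of the pair lies in the tight component of `e`,
and two extensions `{x, y_e, w}`, `{x, y_f, w}` with the same `w` share the pair `{x, w}`.
Hence the neighbourhoods of the pairs `{x, y_e}` are pairwise disjoint; each has more than
`n / (r + 1)` vertices, so there are at most `r` of them.
-/

open Finset

/-- Two edges are in the same tight component of the `3`-uniform hypergraph with edge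
set `E` iff they are related by the reflexive-transitive closure of the relation
"both are edges and they share exactly 2 vertices". -/
def TightRel {V : Type*} [DecidableEq V] (E : Finset (Finset V)) :
    Finset V → Finset V → Prop :=
  Relation.ReflTransGen (fun e f => e ∈ E ∧ f ∈ E ∧ (e ∩ f).card = 2)

section Counting

variable {ι V K : Type*} [Fintype V] [Field K] [LinearOrder K] [IsStrictOrderedRing K]

theorem card_le_of_pairwiseDisjoint_of_lt_card {S : Finset ι} {W : ι → Finset V} {r : ℕ}
    (hW : (S : Set ι).PairwiseDisjoint W)
    (hcard : ∀ i ∈ S, (Fintype.card V : K) / (r + 1) < (W i).card) :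
    S.card ≤ r := by
  classical
  by_contra! hS
  have hsum : ∑ i ∈ S, (W i).card ≤ Fintype.card V := card_biUnion hW ▸ card_le_univ _
  set n : K := (Fintype.card V : K)
  have : n < n := calc
    n = (r + 1) * (n / (r + 1)) := by field_simp
    _ ≤ S.card * (n / (r + 1)) := by gcongr; exact_mod_cast hS
    _ = ∑ i ∈ S, n / (r + 1) := by rw [sum_const, nsmul_eq_mul]
    _ < ∑ i ∈ S, ((W i).card : K) := sum_lt_sum_of_nonempty (card_pos.1 (by omega)) hcard
    _ ≤ n := by rw [← Nat.cast_sum]; exact Nat.cast_le.2 hsum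
  exact lt_irrefl n this

end Counting

namespace TightRel

variable {V : Type*} [DecidableEq V] {E : Finset (Finset V)} {e f g : Finset V}

theorem symm (h : TightRel E e f) : TightRel E f e :=
  Relation.ReflTransGen.mono (fun _ _ ⟨ha, hb, hab⟩ => ⟨hb, ha, by rwa [inter_comm]⟩) _ _ h.swap

theorem trans (hef : TightRel E e f) (hfg : TightRel E f g) : TightRel E e g :=
  Relation.ReflTransGen.trans hef hfg

theorem of_mem_of_mem (hunif : ∀ e ∈ E, e.card = 3) (he : e ∈ E) (hg : g ∈ E) {a b : V}
    (hab : a ≠ b) (ha : a ∈ e ∩ g) (hb : b ∈ e ∩ g) : TightRel E e g := by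
  rcases eq_or_ne e g with rfl | hne
  · exact .refl
  refine .single ⟨he, hg, le_antisymm ?_ ?_⟩
  · have hssub : e ∩ g ⊂ e := by
      refine ⟨inter_subset_left, fun h => hne (eq_of_subset_of_card_le ?_ ?_)⟩
      · exact h.trans inter_subset_right
      · rw [hunif e he, hunif g hg]
    simpa [hunif e he, Nat.lt_succ_iff] using card_lt_card hssub
  · exact card_pair hab ▸ card_le_card (insert_subset ha (singleton_subset_iff.2 hb))

end TightRel

section Codegree

variable {V : Type*} [Fintype V] [DecidableEq V] {E : Finset (Finset V)}

/-- The vertices `w` completing the pair `{u, v}` to an edge; its size is the codegree. -/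
def codegreeNbhd (E : Finset (Finset V)) (u v : V) : Finset V :=
  univ.filter fun w => ({u, v, w} : Finset V) ∈ E

theorem mem_codegreeNbhd {u v w : V} : w ∈ codegreeNbhd E u v ↔ {u, v, w} ∈ E := by
  simp [codegreeNbhd]

theorem ne_of_mem_codegreeNbhd (hunif : ∀ e ∈ E, e.card = 3) {u v w : V}
    (hw : w ∈ codegreeNbhd E u v) : u ≠ w := by
  rintro rfl
  have h3 := hunif _ (mem_codegreeNbhd.1 hw)
  have h2 : ({u, v, u} : Finset V).card ≤ 2 := by simpa using card_le_two (a := v) (b := u)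
  omega

theorem tightRel_of_mem_codegreeNbhd (hunif : ∀ e ∈ E, e.card = 3) {e : Finset V} (he : e ∈ E)
    {x y w : V} (hxy : x ≠ y) (hx : x ∈ e) (hy : y ∈ e) (hw : w ∈ codegreeNbhd E x y) :
    TightRel E e {x, y, w} :=
  .of_mem_of_mem hunif he (mem_codegreeNbhd.1 hw) hxy (by simp [hx]) (by simp [hy])

theorem disjoint_codegreeNbhd_of_not_tightRel (hunif : ∀ e ∈ E, e.card = 3) {e f : Finset V}
    (he : e ∈ E) (hf : f ∈ E) {x y y' : V} (hxe : x ∈ e) (hxf : x ∈ f) (hy : y ∈ e)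
    (hy' : y' ∈ f) (hxy : x ≠ y) (hxy' : x ≠ y') (hef : ¬ TightRel E e f) :
    Disjoint (codegreeNbhd E x y) (codegreeNbhd E x y') := by
  refine disjoint_left.2 fun w hw hw' => hef ?_
  have hshare : TightRel E {x, y, w} {x, y', w} :=
    .of_mem_of_mem hunif (mem_codegreeNbhd.1 hw) (mem_codegreeNbhd.1 hw')
      (ne_of_mem_codegreeNbhd hunif hw) (by simp) (by simp)
  exact (tightRel_of_mem_codegreeNbhd hunif he hxy hxe hy hw).trans <|
    hshare.trans (tightRel_of_mem_codegreeNbhd hunif hf hxy' hxf hy' hw').symm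

end Codegree

theorem stmt5_general {V : Type*} [Fintype V] [DecidableEq V] (E : Finset (Finset V))
    (r : ℕ)
    (hunif : ∀ e ∈ E, e.card = 3)
    (hcod : ∀ u v : V, u ≠ v →
      (Fintype.card V : ℚ) / ((r : ℚ) + 1) <
        ((Finset.univ.filter (fun w => ({u, v, w} : Finset V) ∈ E)).card : ℚ)) :
    ∀ x : V, ∀ S : Finset (Finset V), S ⊆ E → (∀ e ∈ S, x ∈ e) →
      (∀ e ∈ S, ∀ f ∈ S, e ≠ f → ¬ TightRel E e f) → S.card ≤ r := by
  intro x S hSE hxS hS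
  have : Nonempty V := ⟨x⟩
  choose! y hy hyx using fun e he => exists_mem_ne (by rw [hunif e (hSE he)]; norm_num) x
  refine card_le_of_pairwiseDisjoint_of_lt_card (W := fun e => codegreeNbhd E x (y e))
    (fun e he f hf hef => ?_) fun e he => hcod x (y e) (hyx e he).symm
  exact disjoint_codegreeNbhd_of_not_tightRel hunif (hSE he) (hSE hf) (hxS e he) (hxS f hf)
    (hy e he) (hy f hf) (hyx e he).symm (hyx f hf).symm (hS e he f hf hef)

/-- If a 3-uniform hypergraph on `n` vertices has minimum codegree strictly greater than
`n/(r+1)` for an integer `r ≥ 3`, then every vertex meets at most `r` tight components: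
any family of pairwise non-equivalent edges all containing a fixed vertex has size at
most `r`. -/
theorem stmt5 {V : Type*} [Fintype V] [DecidableEq V] (E : Finset (Finset V))
    (r : ℕ) (hr : 3 ≤ r)
    (hunif : ∀ e ∈ E, e.card = 3)
    (hcod : ∀ u v : V, u ≠ v →
      (Fintype.card V : ℚ) / ((r : ℚ) + 1) <
        ((Finset.univ.filter (fun w => ({u, v, w} : Finset V) ∈ E)).card : ℚ)) :
    ∀ x : V, ∀ S : Finset (Finset V), S ⊆ E → (∀ e ∈ S, x ∈ e) →
      (∀ e ∈ S, ∀ f ∈ S, e ≠ f → ¬ TightRel E e f) → S.card ≤ r :=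
  stmt5_general E r hunif hcod
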